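/- Semantics GNO is anti-monotone in preferences: if <1 ⊆ <2 then every GNO-preferred answer set of (P,<2) is a GNO-preferred answer set of (P,<1). -/

import Mathlib

/-- A literal over atoms `A`: `(true, a)` is the atom `a`, `(false, a)` is `¬ a`. -/
abbrev Lit (A : Type) := Bool × A

/-- A rule with head, positive body and negative body. -/
structure Rule (A : Type) where
  head : Lit A
  pos : Set (Lit A)
  neg : Set (Lit A)

variable {A : Type}

/-- Heads of a set of rules. -/
def headSet (R : Set (Rule A)) : Set (Lit A) := Rule.head '' R

/-- `R ⊆ P` positively satisfies `P`. -/
def PosSat (P R : Set (Rule A)) : Prop :=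
  R ⊆ P ∧ ∀ r ∈ P, r.pos ⊆ headSet R → r ∈ R

/-- The minimal set of rules positively satisfying `P`. -/
def MP (P : Set (Rule A)) : Set (Rule A) := ⋂₀ {R | PosSat P R}

/-- A set of rules defeats a rule. -/
def defeatsRule (R : Set (Rule A)) (r : Rule A) : Prop :=
  (headSet R ∩ r.neg).Nonempty

/-- A set of rules defeats a set of rules. -/
def defeatsSet (R₁ R₂ : Set (Rule A)) : Prop := ∃ r ∈ R₂, defeatsRule R₁ r

/-- The reduct `P^R` removes each rule defeated by `R`. -/
def reduct (P R : Set (Rule A)) : Set (Rule A) := {r ∈ P | ¬ defeatsRule R r}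

/-- `R ⊆ P` is a generating set of `P` iff `R = MP (P^R)`. -/
def GenSet (P R : Set (Rule A)) : Prop := R ⊆ P ∧ R = MP (reduct P R)

/-- A set of literals is consistent iff it contains no complementary pair. -/
def Consistent (S : Set (Lit A)) : Prop :=
  ∀ a : A, ¬ (((true, a) ∈ S) ∧ ((false, a) ∈ S))

/-- Answer sets via generating sets. -/
def AnswerSet (P : Set (Rule A)) (S : Set (Lit A)) : Prop :=
  Consistent S ∧ ∃ R, GenSet P R ∧ headSet R = S

/-- `Γ_S(P)`: rules whose positive body is in `S` and negative body disjoint from `S`. -/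
def Gamma (S : Set (Lit A)) (P : Set (Rule A)) : Set (Rule A) :=
  {r ∈ P | r.pos ⊆ S ∧ r.neg ∩ S = ∅}

/-- Fragments of a program. -/
def Frag (P : Set (Rule A)) : Set (Set (Rule A)) := {R | R ⊆ P ∧ MP R = R}

/-- Fragment reduct: remove fragments defeated by a member of `E`. -/
def fragReduct (P : Set (Rule A)) (E : Set (Set (Rule A))) : Set (Set (Rule A)) :=
  {X ∈ Frag P | ¬ ∃ Y ∈ E, defeatsSet Y X}

/-- Stable fragment sets. -/
def StableFragSet (P : Set (Rule A)) (E : Set (Set (Rule A))) : Prop :=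
  E ⊆ Frag P ∧ fragReduct P E = E

/-- Mutually defeating (conflicting) sets of rules. -/
def Conflicting (X Y : Set (Rule A)) : Prop := defeatsSet X Y ∧ defeatsSet Y X

/-- `X` overrides `Y` w.r.t. the preference relation `lt`. -/
def Overrides (lt : Rule A → Rule A → Prop) (X Y : Set (Rule A)) : Prop :=
  Conflicting X Y ∧
    ∀ r₁ ∈ X, defeatsRule Y r₁ → ∃ r₂ ∈ Y, defeatsRule X r₂ ∧ lt r₂ r₁

/-- Preferred fragment reduct (semantics G). -/
def prefFragReduct (lt : Rule A → Rule A → Prop) (P : Set (Rule A))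
    (E : Set (Set (Rule A))) : Set (Set (Rule A)) :=
  {X ∈ Frag P | ¬ ∃ Y ∈ E, defeatsSet Y X ∧ ¬ Overrides lt X Y}

/-- Preferred stable fragment sets (semantics G). -/
def PrefStableFragSet (lt : Rule A → Rule A → Prop) (P : Set (Rule A))
    (E : Set (Set (Rule A))) : Prop :=
  E ⊆ Frag P ∧ prefFragReduct lt P E = E

/-- Preferred answer sets under the fragment-based semantics G. -/
def GPrefAnswerSet (lt : Rule A → Rule A → Prop) (P : Set (Rule A))
    (S : Set (Lit A)) : Prop :=
  Consistent S ∧ ∃ E, PrefStableFragSet lt P E ∧ headSet (⋃₀ E) = S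

/-- `T(r,R)` for semantics GNO. -/
def Trules (lt : Rule A → Rule A → Prop) (r : Rule A) (R : Set (Rule A)) :
    Set (Rule A) :=
  MP {p ∈ R | ¬ lt p r}

/-- GNO reduct: remove rules `r` with `body⁻(r) ∩ head(T(r,R)) ≠ ∅`. -/
def gnoReduct (lt : Rule A → Rule A → Prop) (P R : Set (Rule A)) : Set (Rule A) :=
  {r ∈ P | ¬ (r.neg ∩ headSet (Trules lt r R)).Nonempty}

/-- GNO-preferred generating sets. -/
def GNOPrefGen (lt : Rule A → Rule A → Prop) (P R : Set (Rule A)) : Prop :=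
  GenSet P R ∧ R = MP (gnoReduct lt P R)

/-- GNO-preferred answer sets. -/
def GNOPrefAnswerSet (lt : Rule A → Rule A → Prop) (P : Set (Rule A))
    (S : Set (Lit A)) : Prop :=
  Consistent S ∧ ∃ R, GNOPrefGen lt P R ∧ headSet R = S

/-- A rule defeats a rule. -/
def defeats (r₁ r₂ : Rule A) : Prop := r₁.head ∈ r₂.neg

/-- `r₁` directly overrides `r₂` w.r.t. `lt`. -/
def DirOverrides (lt : Rule A → Rule A → Prop) (r₁ r₂ : Rule A) : Prop :=
  (defeats r₁ r₂ ∧ defeats r₂ r₁) ∧ lt r₂ r₁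

/-- D-reduct for the direct-conflict semantics. -/
def dReduct (lt : Rule A → Rule A → Prop) (P R : Set (Rule A)) : Set (Rule A) :=
  {r₁ ∈ P | ¬ ∃ r₂ ∈ R, defeats r₂ r₁ ∧ ¬ DirOverrides lt r₁ r₂}

/-- D-preferred generating sets. -/
def DPrefGen (lt : Rule A → Rule A → Prop) (P R : Set (Rule A)) : Prop :=
  R = MP (dReduct lt P R)

/-- D-preferred answer sets. -/
def DPrefAnswerSet (lt : Rule A → Rule A → Prop) (P : Set (Rule A))
    (S : Set (Lit A)) : Prop :=
  Consistent S ∧ ∃ R, DPrefGen lt P R ∧ headSet R = S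

/-- Stratified programs. -/
def Stratified (P : Set (Rule A)) : Prop :=
  ∃ lam : Lit A → ℕ, ∀ r ∈ P,
    (∀ l ∈ r.pos, lam l ≤ lam r.head) ∧ (∀ l ∈ r.neg, lam l < lam r.head)


/-!
Passing from `lt₂` to the smaller relation `lt₁` can only enlarge each `T(r,R)`, so the GNO
reduct shrinks. It still contains the ordinary reduct `P^R`, because `T(r,R) ⊆ R`. Hence for a
`lt₂`-preferred generating set `R`, the set `MP (gnoReduct lt₁ P R)` lies between
`MP (P^R) = R` and `MP (gnoReduct lt₂ P R) = R`.
-/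

lemma posSat_self (P : Set (Rule A)) : PosSat P P := ⟨subset_rfl, fun _ hr _ => hr⟩

lemma MP_subset_of_posSat {P R : Set (Rule A)} (h : PosSat P R) : MP P ⊆ R :=
  Set.sInter_subset_of_mem h

lemma MP_subset (P : Set (Rule A)) : MP P ⊆ P :=
  MP_subset_of_posSat (posSat_self P)

lemma MP_mono {P Q : Set (Rule A)} (h : P ⊆ Q) : MP P ⊆ MP Q := by
  intro r hr T hT
  have hPS : PosSat P (T ∩ P) := by
    refine ⟨Set.inter_subset_right, fun s hs hpos => ⟨?_, hs⟩⟩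
    exact hT.2 s (h hs) (hpos.trans (Set.image_mono Set.inter_subset_left))
  exact (MP_subset_of_posSat hPS hr).1

section Preference

variable {lt lt₁ lt₂ : Rule A → Rule A → Prop}

lemma Trules_subset (r : Rule A) (R : Set (Rule A)) : Trules lt r R ⊆ R :=
  (MP_subset _).trans (Set.sep_subset _ _)

lemma Trules_anti (hle : ∀ p r, lt₁ p r → lt₂ p r) (r : Rule A) (R : Set (Rule A)) :
    Trules lt₂ r R ⊆ Trules lt₁ r R :=
  MP_mono fun _ hp => ⟨hp.1, fun h₁ => hp.2 (hle _ _ h₁)⟩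

lemma reduct_subset_gnoReduct (P R : Set (Rule A)) : reduct P R ⊆ gnoReduct lt P R := by
  rintro r ⟨hrP, hundefeated⟩
  refine ⟨hrP, fun ⟨l, hl_neg, hl_head⟩ => hundefeated ⟨l, ?_, hl_neg⟩⟩
  exact Set.image_mono (Trules_subset r R) hl_head

lemma gnoReduct_mono (hle : ∀ p r, lt₁ p r → lt₂ p r) (P R : Set (Rule A)) :
    gnoReduct lt₁ P R ⊆ gnoReduct lt₂ P R := by
  rintro r ⟨hrP, hr⟩
  refine ⟨hrP, fun ⟨l, hl_neg, hl_head⟩ => hr ⟨l, hl_neg, ?_⟩⟩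
  exact Set.image_mono (Trules_anti hle r R) hl_head

lemma GNOPrefGen.of_le {P R : Set (Rule A)} (hle : ∀ p r, lt₁ p r → lt₂ p r)
    (hR : GNOPrefGen lt₂ P R) : GNOPrefGen lt₁ P R := by
  obtain ⟨hgen, hfix⟩ := hR
  refine ⟨hgen, Set.Subset.antisymm ?_ ?_⟩
  · calc R = MP (reduct P R) := hgen.2
      _ ⊆ MP (gnoReduct lt₁ P R) := MP_mono (reduct_subset_gnoReduct P R)
  · calc MP (gnoReduct lt₁ P R) ⊆ MP (gnoReduct lt₂ P R) := MP_mono (gnoReduct_mono hle P R)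
      _ = R := hfix.symm

end Preference

theorem gnoPref_antimono_general (P : Set (Rule A))
    (lt₁ lt₂ : Rule A → Rule A → Prop)
    (hsub : ∀ r₁ r₂, lt₁ r₁ r₂ → lt₂ r₁ r₂)
    (S : Set (Lit A)) (h : GNOPrefAnswerSet lt₂ P S) :
    GNOPrefAnswerSet lt₁ P S := by
  obtain ⟨hcons, R, hR, hheads⟩ := h
  exact ⟨hcons, R, hR.of_le hsub, hheads⟩

/-- semantics GNO is anti-monotone in preferences. -/
theorem gnoPref_antimono (P : Set (Rule A)) (hP : P.Finite)
    (lt₁ lt₂ : Rule A → Rule A → Prop)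
    (htrans₁ : Transitive lt₁) (hasymm₁ : ∀ r₁ r₂, lt₁ r₁ r₂ → ¬ lt₁ r₂ r₁)
    (htrans₂ : Transitive lt₂) (hasymm₂ : ∀ r₁ r₂, lt₂ r₁ r₂ → ¬ lt₂ r₂ r₁)
    (hsub : ∀ r₁ r₂, lt₁ r₁ r₂ → lt₂ r₁ r₂)
    (S : Set (Lit A)) (h : GNOPrefAnswerSet lt₂ P S) :
    GNOPrefAnswerSet lt₁ P S :=
  gnoPref_antimono_general P lt₁ lt₂ hsub S h
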